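/- Let (P,≻,q) be a problem, let N ⊆ I, and let (ℓ_i)_{i∈I} and (k_i)_{i∈I} be vectors of natural numbers with k_i ≥ ℓ_i > 1 for all i. Let μ = GS(P^ℓ̄_N, P^k̄_{-N}, ≻, q), the deferred acceptance outcome when each student i ∈ N reports the truncation P_i^{ℓ_i} and each student i ∉ N reports the truncation P_i^{k_i}. Then every blocking student for μ under the true problem (P,≻,q) is unmatched under μ (i.e., μ(i) = ∅). -/

import Mathlib

/-!
School choice framework following Bonkoungou–Nesterov,
"Reforms meet fairness concerns in school and college admissions".

Students `I` and schools `S` are finite types with `|I| > |S|`.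
A strict preference relation of a student over `S ∪ {∅}` is represented by a list
of `Option S` containing every element exactly once (earlier = more preferred);
`none` is the outside option.  A strict priority order of a school is a list of
`I` containing every student exactly once (earlier = higher priority).
-/

namespace SchoolChoice

variable {I S : Type*} [Fintype I] [DecidableEq I] [Fintype S] [DecidableEq S]

/-- `p` is a strict preference relation on `S ∪ {∅}`: a ranking list containing every
element of `Option S` exactly once. -/
def ValidPref (p : List (Option S)) : Prop := p.Nodup ∧ ∀ x : Option S, x ∈ p

/-- `pr` is a strict priority order: a ranking list containing every student exactly once. -/
def ValidPrio (pr : List I) : Prop := pr.Nodup ∧ ∀ i : I, i ∈ pr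

/-- `a` is strictly preferred to `b` under the preference relation `p`. -/
def prefLt (p : List (Option S)) (a b : Option S) : Prop := p.idxOf a < p.idxOf b

/-- `i` has strictly higher priority than `j` under the priority order `pr`. -/
def prioLt (pr : List I) (i j : I) : Prop := pr.idxOf i < pr.idxOf j

instance (p : List (Option S)) (a b : Option S) : Decidable (prefLt p a b) :=
  inferInstanceAs (Decidable (_ < _))

instance (pr : List I) (i j : I) : Decidable (prioLt pr i j) :=
  inferInstanceAs (Decidable (_ < _))

/-- The acceptable schools of `p` (those preferred to the outside option), in preference
order. -/
def acceptables (p : List (Option S)) : List S := (p.takeWhile Option.isSome).filterMap id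

/-- The truncation of `p` after its `k`-th acceptable school: the preference relation
listing, in the same order, only the `min k _` most-preferred acceptable schools of `p`,
all other schools being unacceptable (kept below `none` in their original order). -/
def truncate (p : List (Option S)) (k : ℕ) : List (Option S) :=
  ((acceptables p).take k).map some ++
    none :: p.filter (fun x => decide (x ≠ none ∧ x ∉ ((acceptables p).take k).map some))

/-- `μ` is a matching: it respects the capacities `q`. -/
def IsMatching (q : S → ℕ) (μ : I → Option S) : Prop :=
  ∀ s : S, (Finset.univ.filter (fun i => μ i = some s)).card ≤ q s

/-- The pair `(i, s)` blocks `μ` under the problem `(P, prio, q)`. -/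
def Blocks (P : I → List (Option S)) (prio : S → List I) (q : S → ℕ)
    (μ : I → Option S) (i : I) (s : S) : Prop :=
  prefLt (P i) (some s) (μ i) ∧
    ((Finset.univ.filter (fun j => μ j = some s)).card < q s ∨
      ∃ j : I, μ j = some s ∧ prioLt (prio s) i j)

/-- `i` is a blocking student for `μ` under `(P, prio, q)`. -/
def BlockingStudent (P : I → List (Option S)) (prio : S → List I) (q : S → ℕ)
    (μ : I → Option S) (i : I) : Prop :=
  ∃ s : S, Blocks P prio q μ i s

/-- `μ` is individually rational under `P`. -/
def IndividuallyRational (P : I → List (Option S)) (μ : I → Option S) : Prop :=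
  ∀ i : I, ¬ prefLt (P i) none (μ i)

/-- `μ` is stable at `(P, prio, q)`. -/
def IsStable (P : I → List (Option S)) (prio : S → List I) (q : S → ℕ)
    (μ : I → Option S) : Prop :=
  IndividuallyRational P μ ∧ ∀ i : I, ¬ BlockingStudent P prio q μ i

/-- The number of blocking students for `μ` under `(P, prio, q)`. -/
noncomputable def numBlocking (P : I → List (Option S)) (prio : S → List I) (q : S → ℕ)
    (μ : I → Option S) : ℕ :=
  {i : I | BlockingStudent P prio q μ i}.ncard

/-! ### The Gale–Shapley student-proposing deferred acceptance mechanism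

The state `σ : I → ℕ` records, for each student, how many of her acceptable schools
have already rejected her; she currently applies to the `σ i`-th school on her list
(if any).  At each round every school tentatively keeps the `q s` highest-priority
students among its current applicants and rejects the rest, who move on. -/

/-- The school student `i` currently applies to. -/
def daTarget (P : I → List (Option S)) (σ : I → ℕ) (i : I) : Option S :=
  (acceptables (P i))[σ i]?

/-- The students tentatively held by school `s`: the `q s` highest-priority current
applicants. -/
def daHeld (P : I → List (Option S)) (prio : S → List I) (q : S → ℕ)
    (σ : I → ℕ) (s : S) : List I :=
  ((prio s).filter (fun i => decide (daTarget P σ i = some s))).take (q s)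

/-- One round of deferred acceptance: every rejected student moves to her next choice. -/
def daStep (P : I → List (Option S)) (prio : S → List I) (q : S → ℕ)
    (σ : I → ℕ) : I → ℕ := fun i =>
  match daTarget P σ i with
  | none => σ i
  | some s => if i ∈ daHeld P prio q σ s then σ i else σ i + 1

/-- The Gale–Shapley (student-proposing deferred acceptance) mechanism.  Iterating the
round map `|I| * |S| + 1` times is guaranteed to reach the terminal state. -/
def GS (P : I → List (Option S)) (prio : S → List I) (q : S → ℕ) : I → Option S :=
  fun i =>
    let σ := (daStep P prio q)^[Fintype.card I * Fintype.card S + 1] (fun _ => 0)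
    match daTarget P σ i with
    | none => none
    | some s => if i ∈ daHeld P prio q σ s then some s else none

/-- The constrained Gale–Shapley mechanism `GS^k`. -/
def GSk (k : ℕ) (P : I → List (Option S)) (prio : S → List I) (q : S → ℕ) : I → Option S :=
  GS (fun i => truncate (P i) k) prio q

/-! ### The Boston (immediate acceptance) mechanism -/

/-- Round `t` of the Boston mechanism: each not-yet-accepted student applies to her
`t`-th ranked acceptable school (0-indexed), and each school permanently accepts, up to
its remaining capacity, its highest-priority new applicants. -/
def bostonRound (P : I → List (Option S)) (prio : S → List I) (q : S → ℕ)
    (μ : I → Option S) (t : ℕ) : I → Option S := fun i =>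
  match μ i with
  | some s => some s
  | none =>
    match (acceptables (P i))[t]? with
    | none => none
    | some s =>
      if i ∈ ((prio s).filter
            (fun j => decide (μ j = none ∧ (acceptables (P j))[t]? = some s))).take
          (q s - (Finset.univ.filter (fun j => μ j = some s)).card)
      then some s else none

/-- The Boston (immediate acceptance) mechanism. -/
def Boston (P : I → List (Option S)) (prio : S → List I) (q : S → ℕ) : I → Option S :=
  (List.range (Fintype.card S)).foldl (bostonRound P prio q) (fun _ => none)

/-- The constrained Boston mechanism `β^k`. -/
def Bostonk (k : ℕ) (P : I → List (Option S)) (prio : S → List I) (q : S → ℕ) :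
    I → Option S :=
  Boston (fun i => truncate (P i) k) prio q

/-! ### The first-preference-first mechanism -/

/-- The adjusted priority profile: each first-preference-first school (member of `fpf`)
ranks students first by the rank they assign to it under `P` (counting the ranking of the
outside option as well), ties broken by the original priority; equal-preference schools
keep their original priority. -/
def fpfPrio (fpf : Finset S) (P : I → List (Option S)) (prio : S → List I) : S → List I :=
  fun s =>
    if s ∈ fpf then
      (List.range (Fintype.card S + 1)).flatMap
        (fun r => (prio s).filter (fun i => decide ((P i).idxOf (some s) = r)))
    else prio s

/-- The first-preference-first mechanism with set `fpf` of first-preference-first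
schools: Gale–Shapley run on the adjusted priorities. -/
def FPF (fpf : Finset S) (P : I → List (Option S)) (prio : S → List I) (q : S → ℕ) :
    I → Option S :=
  GS P (fpfPrio fpf P prio) q

/-- The constrained first-preference-first mechanism `FPF^k`. -/
def FPFk (fpf : Finset S) (k : ℕ) (P : I → List (Option S)) (prio : S → List I)
    (q : S → ℕ) : I → Option S :=
  FPF fpf (fun i => truncate (P i) k) prio q

/-! ### Manipulation and equilibrium notions -/

/-- Student `i` is a manipulating student of the mechanism `φ` (with priorities and
capacities fixed) at the true profile `P`. -/
def ManipulatingStudent (φ : (I → List (Option S)) → I → Option S)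
    (P : I → List (Option S)) (i : I) : Prop :=
  ∃ Q : List (Option S), ValidPref Q ∧
    prefLt (P i) (φ (Function.update P i Q) i) (φ P i)

/-- The mechanism `φ` is not manipulable at `P`. -/
def NotManipulable (φ : (I → List (Option S)) → I → Option S)
    (P : I → List (Option S)) : Prop :=
  ∀ i : I, ¬ ManipulatingStudent φ P i

/-- `P'` is a Nash equilibrium of the game `(φ, P)` in which the sophisticated students
are the members of `M` (who may misreport, and best respond) and all other (sincere)
students report truthfully. -/
def NashEq (φ : (I → List (Option S)) → I → Option S) (P : I → List (Option S))
    (M : Finset I) (P' : I → List (Option S)) : Prop :=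
  (∀ i, ValidPref (P' i)) ∧ (∀ i ∉ M, P' i = P i) ∧
    ∀ i ∈ M, ∀ Q : List (Option S), ValidPref Q →
      ¬ prefLt (P i) (φ (Function.update P' i Q) i) (φ P' i)

/-! ### Semi-sophisticated students -/

/-- Student `i` is guaranteed her first choice `s`: `s` is her most-preferred acceptable
school and `i` is among the `q s` highest-priority students at `s`. -/
def GuaranteedFirstChoice (P : I → List (Option S)) (prio : S → List I) (q : S → ℕ)
    (i : I) (s : S) : Prop :=
  (acceptables (P i)).head? = some s ∧ (prio s).idxOf i < q s

instance (P : I → List (Option S)) (prio : S → List I) (q : S → ℕ) (i : I) (s : S) :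
    Decidable (GuaranteedFirstChoice P prio q i s) :=
  inferInstanceAs (Decidable (_ ∧ _))

/-- School `s` is competitive: at least `q s` students are guaranteed their first
choice `s`. -/
def Competitive (P : I → List (Option S)) (prio : S → List I) (q : S → ℕ) (s : S) : Prop :=
  q s ≤ (Finset.univ.filter (fun i => GuaranteedFirstChoice P prio q i s)).card

instance (P : I → List (Option S)) (prio : S → List I) (q : S → ℕ) (s : S) :
    Decidable (Competitive P prio q s) :=
  inferInstanceAs (Decidable (_ ≤ _))

/-- `P'` is a Nash equilibrium of the game `(GS^ℓ, P)` with semi-sophisticated students: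
every student guaranteed her first choice reports truthfully; every other student reports
truthfully if she has at most `ℓ` acceptable schools or all her acceptable schools are
competitive, and otherwise lists as acceptable, in the order given by her true preference,
only her acceptable schools that are not competitive. -/
def SemiSophProfile (ℓ : ℕ) (P : I → List (Option S)) (prio : S → List I) (q : S → ℕ)
    (P' : I → List (Option S)) : Prop :=
  ∀ i : I,
    ((∃ s : S, GuaranteedFirstChoice P prio q i s) → P' i = P i) ∧
    (¬ (∃ s : S, GuaranteedFirstChoice P prio q i s) →
      (((acceptables (P i)).length ≤ ℓ ∨ ∀ s ∈ acceptables (P i), Competitive P prio q s) →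
          P' i = P i) ∧
      (¬ ((acceptables (P i)).length ≤ ℓ ∨
            ∀ s ∈ acceptables (P i), Competitive P prio q s) →
          acceptables (P' i) =
            (acceptables (P i)).filter (fun s => decide (¬ Competitive P prio q s))))


/-!
Deferred acceptance is stable for the reported preferences: a student is rejected by a school
only when it holds `q s` applicants of higher priority, and a held student never leaves, so
the school stays full of students ranked above her. Truncation keeps the top of each true
ranking intact, so every school that a student matched under the truncated profile truly
prefers to her match is also reported above it. A pair blocking under the true preferences
with a matched student would thus block under the reported ones, which stability excludes.
-/

section ListLemmas

open List

variable {α : Type*} [BEq α] [LawfulBEq α]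

theorem _root_.List.idxOf_map_of_injective {β : Type*} [BEq β] [LawfulBEq β] {f : α → β}
    (hf : Function.Injective f) (l : List α) (a : α) :
    (l.map f).idxOf (f a) = l.idxOf a := by
  simp only [idxOf, findIdx_map, Function.comp_def]
  congr 1
  funext x
  simp [hf.eq_iff]

theorem _root_.List.idxOf_le_of_getElem?_eq {l : List α} {n : ℕ} {a : α} (h : l[n]? = some a) :
    l.idxOf a ≤ n := by
  induction l generalizing n with
  | nil => simp at h
  | cons b l ih =>
    cases n with
    | zero => simp_all
    | succ n => grind

theorem _root_.List.idxOf_take_lt_idxOf_take_iff {l : List α} {k : ℕ} {a b : α}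
    (hb : b ∈ l.take k) :
    (l.take k).idxOf a < (l.take k).idxOf b ↔ l.idxOf a < l.idxOf b := by
  conv_rhs => rw [← take_append_drop k l]
  have hb' := idxOf_lt_length_iff.mpr hb
  rw [idxOf_append, idxOf_append, if_pos hb]
  split
  · rfl
  · rename_i ha
    rw [idxOf_eq_length ha]
    omega

end ListLemmas

theorem _root_.Function.isFixedPt_iterate_or_add_le {α : Type*} {f : α → α} (Φ : α → ℕ)
    (hΦ : ∀ x, ¬ Function.IsFixedPt f x → Φ x < Φ (f x)) (x : α) (n : ℕ) :
    Function.IsFixedPt f (f^[n] x) ∨ Φ x + n ≤ Φ (f^[n] x) := by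
  induction n with
  | zero => simp
  | succ n ih =>
    rw [Function.iterate_succ_apply']
    by_cases hfix : Function.IsFixedPt f (f^[n] x)
    · exact Or.inl (by rw [hfix]; exact hfix)
    · have hlt := hΦ _ hfix
      exact Or.inr (by rcases ih with h | h; exacts [absurd h hfix, by omega])

section Acceptables

variable {S : Type*}

theorem map_some_acceptables (p : List (Option S)) :
    (acceptables p).map some = p.takeWhile Option.isSome := by
  induction p with
  | nil => rfl
  | cons a t ih =>
    cases a with
    | none => rfl
    | some s => simpa [acceptables] using ih

theorem acceptables_append_dropWhile (p : List (Option S)) :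
    (acceptables p).map some ++ p.dropWhile Option.isSome = p := by
  rw [map_some_acceptables, List.takeWhile_append_dropWhile]

theorem nodup_acceptables {p : List (Option S)} (h : p.Nodup) : (acceptables p).Nodup := by
  rw [← List.nodup_map_iff (Option.some_injective S), map_some_acceptables]
  exact (List.takeWhile_prefix _).sublist.nodup h

variable [DecidableEq S]

theorem idxOf_some_eq_of_mem_acceptables {p : List (Option S)} {s : S}
    (hs : s ∈ acceptables p) : p.idxOf (some s) = (acceptables p).idxOf s := by
  conv_lhs => rw [← acceptables_append_dropWhile p]
  rw [List.idxOf_append, if_pos (List.mem_map_of_mem hs),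
    List.idxOf_map_of_injective (Option.some_injective S)]

theorem mem_acceptables_of_idxOf_some_lt {p : List (Option S)} {s : S}
    (h : p.idxOf (some s) < (acceptables p).length) : s ∈ acceptables p := by
  by_contra hs
  have hidx := congrArg (List.idxOf (some s)) (acceptables_append_dropWhile p)
  rw [List.idxOf_append, if_neg (by simpa using hs), List.length_map] at hidx
  omega

theorem idxOf_none (p : List (Option S)) : p.idxOf none = (acceptables p).length := by
  conv_lhs => rw [← acceptables_append_dropWhile p]
  rw [List.idxOf_append, if_neg (by simp)]
  cases hd : p.dropWhile Option.isSome with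
  | nil => simp
  | cons x r =>
    have hx := List.head_dropWhile_not Option.isSome (l := p) (by simp [hd])
    simp_all

theorem prefLt_some_iff {p : List (Option S)} {s s₀ : S} (hs₀ : s₀ ∈ acceptables p) :
    prefLt p (some s) (some s₀) ↔ (acceptables p).idxOf s < (acceptables p).idxOf s₀ := by
  have hlt := List.idxOf_lt_length_of_mem hs₀
  unfold prefLt
  rw [idxOf_some_eq_of_mem_acceptables hs₀]
  constructor
  · intro h
    have hs := mem_acceptables_of_idxOf_some_lt (h.trans hlt)
    rwa [idxOf_some_eq_of_mem_acceptables hs] at h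
  · intro h
    have hs : s ∈ acceptables p := List.idxOf_lt_length_iff.mp (h.trans hlt)
    rwa [idxOf_some_eq_of_mem_acceptables hs]

theorem exists_lt_of_prefLt_getElem? {p : List (Option S)} {s : S} {n : ℕ}
    (h : prefLt p (some s) (acceptables p)[n]?) :
    ∃ t < n, (acceptables p)[t]? = some s := by
  cases hn : (acceptables p)[n]? with
  | some s₀ =>
    have hs₀ := List.mem_of_getElem? hn
    rw [hn, prefLt_some_iff hs₀] at h
    have hs : s ∈ acceptables p :=
      List.idxOf_lt_length_iff.mp (h.trans (List.idxOf_lt_length_of_mem hs₀))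
    exact ⟨_, h.trans_le (List.idxOf_le_of_getElem?_eq hn), List.getElem?_idxOf hs⟩
  | none =>
    rw [hn, prefLt, idxOf_none] at h
    have hs := mem_acceptables_of_idxOf_some_lt h
    refine ⟨_, (List.idxOf_lt_length_of_mem hs).trans_le ?_, List.getElem?_idxOf hs⟩
    simpa using hn

theorem acceptables_truncate (p : List (Option S)) (k : ℕ) :
    acceptables (truncate p k) = (acceptables p).take k := by
  have hsome : ∀ x ∈ ((acceptables p).take k).map some, x.isSome := fun x hx => by
    obtain ⟨y, -, rfl⟩ := List.mem_map.mp hx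
    rfl
  unfold truncate
  rw [acceptables, List.takeWhile_append_of_pos hsome, List.takeWhile_cons_of_neg (by simp),
    List.append_nil, List.filterMap_map]
  exact List.filterMap_some

theorem prefLt_truncate {p : List (Option S)} {k : ℕ} {s s₀ : S}
    (hs₀ : s₀ ∈ acceptables (truncate p k)) (h : prefLt p (some s) (some s₀)) :
    prefLt (truncate p k) (some s) (some s₀) := by
  rw [acceptables_truncate] at hs₀
  rw [prefLt_some_iff (List.mem_of_mem_take hs₀)] at h
  rwa [prefLt_some_iff (by rwa [acceptables_truncate]), acceptables_truncate,
    List.idxOf_take_lt_idxOf_take_iff hs₀]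

end Acceptables

section DeferredAcceptance

variable {I S : Type*} [DecidableEq S] {P : I → List (Option S)} {prio : S → List I}
  {q : S → ℕ}

theorem nodup_daHeld {σ : I → ℕ} {s : S} (hnd : (prio s).Nodup) :
    (daHeld P prio q σ s).Nodup :=
  ((List.take_sublist _ _).trans List.filter_sublist).nodup hnd

theorem daTarget_of_mem_daHeld {σ : I → ℕ} {j : I} {s : S} (hj : j ∈ daHeld P prio q σ s) :
    daTarget P σ j = some s := by
  simpa using (List.mem_filter.mp (List.mem_of_mem_take hj)).2

variable [DecidableEq I]

def daRound (P : I → List (Option S)) (prio : S → List I) (q : S → ℕ) (n : ℕ) :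
    I → ℕ :=
  (daStep P prio q)^[n] (fun _ => 0)

def applicantsAbove (P : I → List (Option S)) (prio : S → List I) (σ : I → ℕ) (i : I)
    (s : S) : List I :=
  ((prio s).take ((prio s).idxOf i)).filter (fun j => daTarget P σ j = some s)

variable (P prio q) in
theorem daStep_eq_self_or_rejected (σ : I → ℕ) (i : I) :
    daStep P prio q σ i = σ i ∨
      (daStep P prio q σ i = σ i + 1 ∧
        ∃ s, daTarget P σ i = some s ∧ i ∉ daHeld P prio q σ s) := by
  cases ht : daTarget P σ i with
  | none => simp [daStep, ht]
  | some s =>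
    by_cases hh : i ∈ daHeld P prio q σ s <;> simp [daStep, ht, hh]

theorem daStep_of_mem_daHeld {σ : I → ℕ} {j : I} {s : S} (ht : daTarget P σ j = some s)
    (hj : j ∈ daHeld P prio q σ s) : daStep P prio q σ j = σ j := by
  simp [daStep, ht, hj]

theorem mem_daHeld_of_isFixedPt {σ : I → ℕ} (hfix : Function.IsFixedPt (daStep P prio q) σ)
    {j : I} {s : S} (ht : daTarget P σ j = some s) : j ∈ daHeld P prio q σ s := by
  by_contra hrej
  have hstep := congrFun hfix j
  simp [daStep, ht, hrej] at hstep

theorem le_daStep (σ : I → ℕ) (i : I) : σ i ≤ daStep P prio q σ i := by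
  rcases daStep_eq_self_or_rejected P prio q σ i with h | ⟨h, -⟩ <;> omega

theorem daRound_le_length (n : ℕ) (i : I) :
    daRound P prio q n i ≤ (acceptables (P i)).length := by
  induction n with
  | zero => simp [daRound]
  | succ n ih =>
    rw [daRound, Function.iterate_succ_apply', ← daRound]
    rcases daStep_eq_self_or_rejected P prio q (daRound P prio q n) i
      with h | ⟨h, s, hs, -⟩
    · rwa [h]
    · have := (List.getElem?_eq_some_iff.mp hs).1
      omega

/-- Every round that is not final raises the total number of rejections `∑ i, σ i`, which
never exceeds `|I| * |S|`. -/
theorem isFixedPt_daRound [Fintype I] [Fintype S] (hP : ∀ i, (acceptables (P i)).Nodup) :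
    Function.IsFixedPt (daStep P prio q)
      (daRound P prio q (Fintype.card I * Fintype.card S + 1)) := by
  have hΦ : ∀ σ : I → ℕ, ¬ Function.IsFixedPt (daStep P prio q) σ →
      ∑ i, σ i < ∑ i, daStep P prio q σ i := by
    intro σ hσ
    obtain ⟨i, hi⟩ : ∃ i, daStep P prio q σ i ≠ σ i := by
      by_contra! h
      exact hσ (funext h)
    exact Finset.sum_lt_sum (fun i _ => le_daStep σ i)
      ⟨i, Finset.mem_univ i, lt_of_le_of_ne (le_daStep σ i) hi.symm⟩
  have hbound : ∑ i, daRound P prio q (Fintype.card I * Fintype.card S + 1) i ≤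
      Fintype.card I * Fintype.card S := by
    calc _ ≤ ∑ _i : I, Fintype.card S :=
          Finset.sum_le_sum fun i _ => (daRound_le_length _ i).trans (hP i).length_le_card
      _ = _ := by simp
  rcases Function.isFixedPt_iterate_or_add_le (fun σ => ∑ i, σ i) hΦ (fun _ => 0)
    (Fintype.card I * Fintype.card S + 1) with h | h
  · exact h
  · simp only [Finset.sum_const_zero, zero_add] at h
    exact absurd (h.trans hbound) (by omega)

theorem prioLt_of_mem_applicantsAbove {σ : I → ℕ} {i j : I} {s : S}
    (hj : j ∈ applicantsAbove P prio σ i s) : prioLt (prio s) j i := by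
  have hj' := (List.mem_filter.mp hj).1
  exact (List.mem_take_iff_idxOf_lt (List.mem_of_mem_take hj')).mp hj'

theorem daTarget_of_mem_applicantsAbove {σ : I → ℕ} {i j : I} {s : S}
    (hj : j ∈ applicantsAbove P prio σ i s) : daTarget P σ j = some s := by
  simpa using (List.mem_filter.mp hj).2

theorem daHeld_eq_take_applicantsAbove {σ : I → ℕ} {i : I} {s : S}
    (h : q s ≤ (applicantsAbove P prio σ i s).length) :
    daHeld P prio q σ s = (applicantsAbove P prio σ i s).take (q s) := by
  rw [daHeld, ← List.take_append_drop ((prio s).idxOf i) (prio s), List.filter_append,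
    List.take_append, ← applicantsAbove, Nat.sub_eq_zero_of_le h, List.take_zero,
    List.append_nil]

theorem le_length_applicantsAbove_of_rejected {σ : I → ℕ} {i : I} {s : S} (hi : i ∈ prio s)
    (ht : daTarget P σ i = some s) (hrej : i ∉ daHeld P prio q σ s) :
    q s ≤ (applicantsAbove P prio σ i s).length := by
  by_contra! hlt
  apply hrej
  have hsplit : prio s = (prio s).take ((prio s).idxOf i) ++
      i :: (prio s).drop ((prio s).idxOf i + 1) := by
    have hidx := List.idxOf_lt_length_of_mem hi
    conv_lhs => rw [← List.take_append_drop ((prio s).idxOf i) (prio s)]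
    rw [List.drop_eq_getElem_cons hidx, List.getElem_idxOf hidx]
  rw [daHeld, hsplit, List.filter_append, List.filter_cons_of_pos (by simpa using ht),
    List.take_append, ← applicantsAbove,
    show q s - (applicantsAbove P prio σ i s).length =
      (q s - (applicantsAbove P prio σ i s).length - 1) + 1 by omega, List.take_succ_cons]
  exact List.mem_append_right _ List.mem_cons_self

/-- The students held by `s` keep applying to it, and they all rank above `i`. -/
theorem le_length_applicantsAbove_daStep {σ : I → ℕ} {i : I} {s : S} (hnd : (prio s).Nodup)
    (h : q s ≤ (applicantsAbove P prio σ i s).length) :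
    q s ≤ (applicantsAbove P prio (daStep P prio q σ) i s).length := by
  have hheld := daHeld_eq_take_applicantsAbove h
  have hsub : daHeld P prio q σ s ⊆ applicantsAbove P prio (daStep P prio q σ) i s := by
    intro j hj
    have hj' : j ∈ applicantsAbove P prio σ i s := List.mem_of_mem_take (hheld ▸ hj)
    have ht := daTarget_of_mem_applicantsAbove hj'
    refine List.mem_filter.mpr ⟨(List.mem_filter.mp hj').1, ?_⟩
    simpa [daTarget, daStep_of_mem_daHeld ht hj] using ht
  calc q s = (daHeld P prio q σ s).length := by rw [hheld, List.length_take]; omega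
    _ ≤ _ := ((nodup_daHeld hnd).subperm hsub).length_le

/-- `t < daRound P prio q n i` says that `i` was rejected by her `t`-th school during the
first `n` rounds. -/
theorem le_length_applicantsAbove_daRound (hprio : ∀ s, ValidPrio (prio s)) {n t : ℕ} {i : I}
    {s : S} (ht : t < daRound P prio q n i) (hs : (acceptables (P i))[t]? = some s) :
    q s ≤ (applicantsAbove P prio (daRound P prio q n) i s).length := by
  induction n with
  | zero => simp [daRound] at ht
  | succ n ih =>
    rw [daRound, Function.iterate_succ_apply', ← daRound] at ht ⊢
    apply le_length_applicantsAbove_daStep (hprio s).1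
    by_cases hlt : t < daRound P prio q n i
    · exact ih hlt
    rcases daStep_eq_self_or_rejected P prio q (daRound P prio q n) i
      with h | ⟨h, s', hs', hrej⟩
    · omega
    obtain rfl : s' = s := by
      rw [daTarget, show daRound P prio q n i = t by omega, hs] at hs'
      exact (Option.some_injective _ hs').symm
    exact le_length_applicantsAbove_of_rejected ((hprio s').2 i) hs' hrej

variable [Fintype I] [Fintype S]

theorem mem_acceptables_of_GS_eq_some {i : I} {s : S} (h : GS P prio q i = some s) :
    s ∈ acceptables (P i) := by
  simp only [GS] at h
  split at h
  · simp at h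
  · rename_i s' hs'
    split_ifs at h
    cases h
    exact List.mem_of_getElem? hs'

theorem GS_eq_daTarget (hP : ∀ i, (acceptables (P i)).Nodup) (i : I) :
    GS P prio q i =
      daTarget P (daRound P prio q (Fintype.card I * Fintype.card S + 1)) i := by
  have hfix := isFixedPt_daRound (prio := prio) (q := q) hP
  set σ := daRound P prio q (Fintype.card I * Fintype.card S + 1)
  show (match daTarget P σ i with
    | none => none
    | some s => if i ∈ daHeld P prio q σ s then some s else none) = daTarget P σ i
  cases ht : daTarget P σ i with
  | none => rfl
  | some s => exact if_pos (mem_daHeld_of_isFixedPt hfix ht)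

theorem GS_eq_some_iff_mem_daHeld (hP : ∀ i, (acceptables (P i)).Nodup) {j : I} {s : S} :
    GS P prio q j = some s ↔
      j ∈ daHeld P prio q (daRound P prio q (Fintype.card I * Fintype.card S + 1)) s := by
  rw [GS_eq_daTarget hP]
  exact ⟨mem_daHeld_of_isFixedPt (isFixedPt_daRound hP), daTarget_of_mem_daHeld⟩

theorem not_blockingStudent_GS (hP : ∀ i, (acceptables (P i)).Nodup)
    (hprio : ∀ s, ValidPrio (prio s)) (i : I) :
    ¬ BlockingStudent P prio q (GS P prio q) i := by
  rintro ⟨s, hpref, hblock⟩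
  set σ := daRound P prio q (Fintype.card I * Fintype.card S + 1)
  rw [GS_eq_daTarget hP, daTarget] at hpref
  obtain ⟨t, ht, hs⟩ := exists_lt_of_prefLt_getElem? hpref
  have hfull := le_length_applicantsAbove_daRound hprio ht hs
  have hheld := daHeld_eq_take_applicantsAbove hfull
  rcases hblock with hcap | ⟨j, hj, hij⟩
  · have hsub : (daHeld P prio q σ s).toFinset ⊆
        Finset.univ.filter (fun j => GS P prio q j = some s) := by
      intro j hj
      simpa [GS_eq_some_iff_mem_daHeld hP] using hj
    have hcard := Finset.card_le_card hsub
    rw [List.toFinset_card_of_nodup (nodup_daHeld (hprio s).1), hheld, List.length_take] at hcard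
    omega
  · rw [GS_eq_some_iff_mem_daHeld hP, hheld] at hj
    exact lt_asymm hij (prioLt_of_mem_applicantsAbove (List.mem_of_mem_take hj))

end DeferredAcceptance

theorem blocking_student_unmatched_under_truncations_general
    {I S : Type*} [Fintype I] [DecidableEq I] [Fintype S] [DecidableEq S]
    (P : I → List (Option S)) (prio : S → List I) (q : S → ℕ)
    (hP : ∀ i, ValidPref (P i)) (hprio : ∀ s, ValidPrio (prio s))
    (N : Finset I) (lv kv : I → ℕ) :
    ∀ i : I,
      BlockingStudent P prio q
        (GS (fun j => truncate (P j) (if j ∈ N then lv j else kv j)) prio q) i →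
      GS (fun j => truncate (P j) (if j ∈ N then lv j else kv j)) prio q i = none := by
  set Q : I → List (Option S) := fun j => truncate (P j) (if j ∈ N then lv j else kv j)
  have hQ : ∀ j, (acceptables (Q j)).Nodup := fun j => by
    simpa only [Q, acceptables_truncate] using
      (nodup_acceptables (hP j).1).sublist (List.take_sublist _ _)
  rintro i ⟨s, hpref, hblock⟩
  by_contra hmatched
  obtain ⟨s₀, hs₀⟩ := Option.ne_none_iff_exists'.mp hmatched
  have hs₀Q : s₀ ∈ acceptables (Q i) := mem_acceptables_of_GS_eq_some hs₀
  rw [hs₀] at hpref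
  refine not_blockingStudent_GS hQ hprio i ⟨s, ?_, hblock⟩
  rw [hs₀]
  exact prefLt_truncate hs₀Q hpref

/-- Lemma 2: if each student in `N` reports the truncation of her
preference after her `ℓᵢ`-th acceptable school and every other student the truncation
after her `kᵢ`-th acceptable school (with `kᵢ ≥ ℓᵢ > 1`), then every blocking student
for the resulting deferred acceptance matching under the true problem `(P,≻,q)` is
unmatched. -/
theorem blocking_student_unmatched_under_truncations
    {I S : Type*} [Fintype I] [DecidableEq I] [Fintype S] [DecidableEq S]
    (hIS : Fintype.card S < Fintype.card I)
    (P : I → List (Option S)) (prio : S → List I) (q : S → ℕ)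
    (hP : ∀ i, ValidPref (P i)) (hprio : ∀ s, ValidPrio (prio s))
    (N : Finset I) (lv kv : I → ℕ)
    (hl : ∀ i, 1 < lv i) (hlk : ∀ i, lv i ≤ kv i) :
    ∀ i : I,
      BlockingStudent P prio q
        (GS (fun j => truncate (P j) (if j ∈ N then lv j else kv j)) prio q) i →
      GS (fun j => truncate (P j) (if j ∈ N then lv j else kv j)) prio q i = none :=
  blocking_student_unmatched_under_truncations_general P prio q hP hprio N lv kv

end SchoolChoice
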